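/- Exhaustive rewriting solves the well-defined conversion problem: for a well-defining conversion C over a finite set B of base units, the conversion closure C* equals the relation C♯ := { (u, r·s⁻¹, v) | rwr*(C)(u) = (r, w) and rwr*(C)(v) = (s, w') with w = w' }, where rwr*(C)(u) := rwr(C)^{|B|}(eval u). -/

import Mathlib

open Finsupp

/-- The positive rationals, as a multiplicative group. -/
abbrev Ratio : Type := {q : ℚ // 0 < q}

/-- Prefixes: the free abelian group over base prefixes `P`. -/
abbrev PrefG (P : Type*) : Type _ := P →₀ ℤ
/-- Root units: the free abelian group over base units `B`. -/
abbrev RootG (B : Type*) : Type _ := B →₀ ℤ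
/-- Units: the free abelian group over preunits (prefix, base unit). -/
abbrev UnitG (P B : Type*) : Type _ := ((P →₀ ℤ) × B) →₀ ℤ

variable {P B D : Type*}

/-- The root of a unit: forget all prefixes. -/
noncomputable def rootU (u : UnitG P B) : RootG B :=
  Finsupp.mapDomain Prod.snd u

/-- Embed a root unit back into the units, with empty prefixes. -/
noncomputable def unrootU (f : RootG B) : UnitG P B :=
  Finsupp.mapDomain (fun b => ((0 : PrefG P), b)) f

/-- Strip all prefixes from a unit. -/
noncomputable def stripU (u : UnitG P B) : UnitG P B := unrootU (rootU u)

/-- The value of a prefix, given values of base prefixes. -/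
noncomputable def valP (val₀ : P → Ratio) (f : PrefG P) : Ratio :=
  ∏ p ∈ f.support, val₀ p ^ (f p)

/-- The prefix value of a unit. -/
noncomputable def pvalU (val₀ : P → Ratio) (g : UnitG P B) : Ratio :=
  ∏ x ∈ g.support, valP val₀ x.1 ^ (g x)

/-- The dimension of a root unit, given dimensions of base units. -/
noncomputable def dimRoot (dim₀ : B → D →₀ ℤ) (f : RootG B) : D →₀ ℤ :=
  ∑ b ∈ f.support, f b • dim₀ b

/-- The dimension of a unit. -/
noncomputable def dimU (dim₀ : B → D →₀ ℤ) (u : UnitG P B) : D →₀ ℤ :=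
  dimRoot dim₀ (rootU u)

/-- The combined prefix of a unit. -/
noncomputable def prefU (u : UnitG P B) : PrefG P :=
  ∑ x ∈ u.support, u x • x.1

/-- Normalization of a unit. -/
noncomputable def normU (u : UnitG P B) : PrefG P × RootG B :=
  (prefU u, rootU u)

/-- Evaluation of a unit. -/
noncomputable def evalU (val₀ : P → Ratio) (u : UnitG P B) : Ratio × RootG B :=
  (pvalU val₀ u, rootU u)

/-- A unit conversion: dimensionally consistent and functional in the ratio. -/
def IsConversion (dim₀ : B → D →₀ ℤ) (C : Set (UnitG P B × Ratio × UnitG P B)) : Prop :=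
  (∀ u r v, (u, r, v) ∈ C → dimU dim₀ u = dimU dim₀ v) ∧
  (∀ u r r' v, (u, r, v) ∈ C → (u, r', v) ∈ C → r = r')

/-- The closure rules for unit conversions. -/
inductive ClosureRel {P B : Type*} (val₀ : P → Ratio)
    (C : Set (UnitG P B × Ratio × UnitG P B)) :
    UnitG P B → Ratio → UnitG P B → Prop
  | base {u r v} : (u, r, v) ∈ C → ClosureRel val₀ C u r v
  | mul {u r v u' r' v'} : ClosureRel val₀ C u r v → ClosureRel val₀ C u' r' v' →
      ClosureRel val₀ C (u + u') (r * r') (v + v')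
  | inv {u r v} : ClosureRel val₀ C u r v → ClosureRel val₀ C (-u) r⁻¹ (-v)
  | pe (u : UnitG P B) : ClosureRel val₀ C u (pvalU val₀ u) (stripU u)
  | pe' (u : UnitG P B) : ClosureRel val₀ C (stripU u) (pvalU val₀ u)⁻¹ u

/-- The conversion closure: the smallest relation containing `C` closed under the rules. -/
def convClosure (val₀ : P → Ratio) (C : Set (UnitG P B × Ratio × UnitG P B)) :
    Set (UnitG P B × Ratio × UnitG P B) :=
  {t | ClosureRel val₀ C t.1 t.2.1 t.2.2}

/-- Convertibility with respect to a conversion. -/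
def Convertible (C : Set (UnitG P B × Ratio × UnitG P B)) (u v : UnitG P B) : Prop :=
  ∃ r, (u, r, v) ∈ C

/-- Coherence with respect to a conversion. -/
def Coherent (C : Set (UnitG P B × Ratio × UnitG P B)) (u v : UnitG P B) : Prop :=
  (u, (1 : Ratio), v) ∈ C

/-- The unit `δu₀` corresponding to a base unit. -/
noncomputable def deltaB (P : Type*) {B : Type*} (u₀ : B) : UnitG P B :=
  Finsupp.single ((0 : PrefG P), u₀) 1

/-- A defining conversion: basic and functional in its first component. -/
def IsDefining (C : Set (UnitG P B × Ratio × UnitG P B)) : Prop :=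
  (∀ u r v, (u, r, v) ∈ C → ∃ u₀ : B, u = deltaB P u₀) ∧
  (∀ u r v r' v', (u, r, v) ∈ C → (u, r', v') ∈ C → v = v')

/-- One-step dependency between base units. -/
def Depends (C : Set (UnitG P B × Ratio × UnitG P B)) (u₀ v₀ : B) : Prop :=
  ∃ r v, (deltaB P u₀, r, v) ∈ C ∧ v₀ ∈ (rootU v).support

/-- The dependency order `>_C`. -/
def DepOrd (C : Set (UnitG P B × Ratio × UnitG P B)) : B → B → Prop :=
  Relation.TransGen (Depends C)

/-- The domain of a defining conversion. -/
def domC (C : Set (UnitG P B × Ratio × UnitG P B)) : Set B :=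
  {u₀ : B | ∃ r v, (deltaB P u₀, r, v) ∈ C}


/-- Definition expansion. -/
noncomputable def xpd (C : Set (UnitG P B × Ratio × UnitG P B)) (u₀ : B) :
    Ratio × UnitG P B :=
  haveI := Classical.propDecidable (∃ rv : Ratio × UnitG P B, (deltaB P u₀, rv.1, rv.2) ∈ C)
  if h : ∃ rv : Ratio × UnitG P B, (deltaB P u₀, rv.1, rv.2) ∈ C then h.choose
  else (1, deltaB P u₀)

/-- The base rewriting map. -/
noncomputable def rwrB (val₀ : P → Ratio) (C : Set (UnitG P B × Ratio × UnitG P B))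
    (u₀ : B) : Ratio × RootG B :=
  ((xpd C u₀).1 * pvalU val₀ (xpd C u₀).2, rootU (xpd C u₀).2)

/-- One rewriting step on evaluated units. -/
noncomputable def rwrStep (val₀ : P → Ratio) (C : Set (UnitG P B × Ratio × UnitG P B)) :
    Ratio × RootG B → Ratio × RootG B :=
  fun p => (p.1 * ∏ b ∈ p.2.support, (rwrB val₀ C b).1 ^ (p.2 b),
            ∑ b ∈ p.2.support, p.2 b • (rwrB val₀ C b).2)

/-- Exhaustive rewriting: evaluate and rewrite `|B|` times. -/
noncomputable def rwrStar (val₀ : P → Ratio) (C : Set (UnitG P B × Ratio × UnitG P B))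
    (u : UnitG P B) : Ratio × RootG B :=
  (rwrStep val₀ C)^[Nat.card B] (evalU val₀ u)

/-!
Rewriting is sound: each step replaces a base unit by its definition, which the closure
derives from the base rule and prefix evaluation, so every unit converts to the unprefixed
form of its rewriting. It is complete because `rwrStar` is a homomorphism from units to
evaluated units under which both sides of every closure rule agree up to the ratio of the
rule. For the base rule this needs `|B|` steps to reach a normal form: the number of defined
units reachable from a base unit drops strictly along each dependency, by well-foundedness,
and never exceeds `|B|`.
-/

open Function Relation

section Evaluation

variable (val₀ : P → Ratio)

lemma pvalU_zero : pvalU val₀ (0 : UnitG P B) = 1 := Finset.prod_empty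

lemma pvalU_add (u v : UnitG P B) : pvalU val₀ (u + v) = pvalU val₀ u * pvalU val₀ v :=
  Finsupp.prod_add_index' (fun _ => zpow_zero _) (fun _ => zpow_add _)

lemma pvalU_unrootU (f : RootG B) : pvalU val₀ (unrootU f : UnitG P B) = 1 := by
  classical
  refine Finset.prod_eq_one fun x hx => ?_
  obtain ⟨b, -, rfl⟩ := Finset.mem_image.mp (Finsupp.mapDomain_support hx)
  simp [valP]

lemma pvalU_stripU (u : UnitG P B) : pvalU val₀ (stripU u) = 1 := pvalU_unrootU val₀ _

lemma pvalU_deltaB (b : B) : pvalU val₀ (deltaB P b) = 1 := by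
  simp [pvalU, deltaB, valP]

end Evaluation

section Roots

lemma rootU_add (u v : UnitG P B) : rootU (u + v) = rootU u + rootU v := Finsupp.mapDomain_add

lemma rootU_unrootU (f : RootG B) : rootU (unrootU f : UnitG P B) = f := by
  rw [rootU, unrootU, ← Finsupp.mapDomain_comp]
  exact Finsupp.mapDomain_id

lemma rootU_stripU (u : UnitG P B) : rootU (stripU u) = rootU u := rootU_unrootU _

lemma stripU_stripU (u : UnitG P B) : stripU (stripU u) = stripU u := by
  rw [stripU, rootU_stripU, stripU]

lemma rootU_deltaB (b : B) : rootU (deltaB P b) = Finsupp.single b 1 := Finsupp.mapDomain_single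

lemma unrootU_eq_sum (f : RootG B) :
    (unrootU f : UnitG P B) = ∑ b ∈ f.support, f b • deltaB P b := by
  conv_lhs => rw [← Finsupp.sum_single f]
  rw [unrootU, Finsupp.sum, Finsupp.mapDomain_finsetSum]
  refine Finset.sum_congr rfl fun b _ => ?_
  rw [Finsupp.mapDomain_single, deltaB, Finsupp.smul_single, smul_eq_mul, mul_one]

end Roots

section Rewriting

variable (val₀ : P → Ratio) (C : Set (UnitG P B × Ratio × UnitG P B))

noncomputable def mulAdd (p q : Ratio × RootG B) : Ratio × RootG B := (p.1 * q.1, p.2 + q.2)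

lemma evalU_add (u v : UnitG P B) :
    evalU val₀ (u + v) = mulAdd (evalU val₀ u) (evalU val₀ v) := by
  rw [evalU, pvalU_add, rootU_add]; rfl

lemma semiconj₂_rwrStep : Semiconj₂ (rwrStep val₀ C) mulAdd mulAdd := by
  intro p q
  refine Prod.ext ?_ ?_
  · change p.1 * q.1 * (p.2 + q.2).prod (fun b k => (rwrB val₀ C b).1 ^ k) =
      p.1 * p.2.prod _ * (q.1 * q.2.prod _)
    rw [Finsupp.prod_add_index' (fun _ => zpow_zero _) (fun _ => zpow_add _), mul_mul_mul_comm]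
  · exact Finsupp.sum_add_index' (h := fun b k => k • (rwrB val₀ C b).2)
      (fun _ => zero_smul ℤ _) (fun _ _ _ => add_smul _ _ _)

lemma rwrStep_const (c : Ratio) : rwrStep val₀ C (c, 0) = (c, 0) := by
  simp [rwrStep]

lemma rwrStep_iterate_mul_fst (k : ℕ) (c : Ratio) (p : Ratio × RootG B) :
    (rwrStep val₀ C)^[k] (c * p.1, p.2) =
      (c * ((rwrStep val₀ C)^[k] p).1, ((rwrStep val₀ C)^[k] p).2) := by
  have h := ((semiconj₂_rwrStep val₀ C).iterate k).eq (c, 0) p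
  rwa [iterate_fixed (rwrStep_const val₀ C c), mulAdd, mulAdd, zero_add, zero_add] at h

lemma rwrStar_add (u v : UnitG P B) :
    rwrStar val₀ C (u + v) = mulAdd (rwrStar val₀ C u) (rwrStar val₀ C v) := by
  rw [rwrStar, evalU_add, ((semiconj₂_rwrStep val₀ C).iterate _).eq]; rfl

lemma rwrStar_zero : rwrStar val₀ C (0 : UnitG P B) = (1, 0) := by
  have h0 : evalU val₀ (0 : UnitG P B) = (1, 0) := by
    rw [evalU, pvalU_zero, rootU, Finsupp.mapDomain_zero]
  rw [rwrStar, h0, iterate_fixed (rwrStep_const val₀ C 1)]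

lemma rwrStar_neg (u : UnitG P B) :
    rwrStar val₀ C (-u) = ((rwrStar val₀ C u).1⁻¹, -(rwrStar val₀ C u).2) := by
  have h := rwrStar_add val₀ C u (-u)
  rw [add_neg_cancel, rwrStar_zero, mulAdd] at h
  exact Prod.ext (eq_inv_of_mul_eq_one_right (congrArg Prod.fst h).symm)
    (eq_neg_of_add_eq_zero_right (congrArg Prod.snd h).symm)

lemma rwrStar_eq_stripU (u : UnitG P B) :
    rwrStar val₀ C u = (pvalU val₀ u * (rwrStar val₀ C (stripU u)).1,
      (rwrStar val₀ C (stripU u)).2) := by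
  have h : evalU val₀ u = (pvalU val₀ u * (evalU val₀ (stripU u)).1,
      (evalU val₀ (stripU u)).2) := by
    rw [evalU, evalU, pvalU_stripU, rootU_stripU, mul_one]
  rw [rwrStar, h, rwrStep_iterate_mul_fst, rwrStar]

end Rewriting

section Expansion

variable {C : Set (UnitG P B × Ratio × UnitG P B)} {b : B}

lemma xpd_mem (hb : b ∈ domC C) : (deltaB P b, (xpd C b).1, (xpd C b).2) ∈ C := by
  have hex : ∃ rv : Ratio × UnitG P B, (deltaB P b, rv.1, rv.2) ∈ C :=
    let ⟨r, v, h⟩ := hb; ⟨(r, v), h⟩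
  rw [xpd, dif_pos hex]
  exact hex.choose_spec

lemma xpd_of_notMem (hb : b ∉ domC C) : xpd C b = (1, deltaB P b) :=
  dif_neg fun ⟨rv, h⟩ => hb ⟨rv.1, rv.2, h⟩

lemma xpd_eq_of_mem (hr : ∀ u r r' v, (u, r, v) ∈ C → (u, r', v) ∈ C → r = r')
    (hdef : IsDefining C) {t : Ratio} {v : UnitG P B} (h : (deltaB P b, t, v) ∈ C) :
    xpd C b = (t, v) := by
  have hm := xpd_mem ⟨t, v, h⟩
  have hv := hdef.2 _ _ _ _ _ hm h
  exact Prod.ext (hr _ _ _ _ (hv ▸ hm) h) hv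

lemma rwrB_of_notMem (val₀ : P → Ratio) (hb : b ∉ domC C) :
    rwrB val₀ C b = (1, Finsupp.single b 1) := by
  rw [rwrB, xpd_of_notMem hb, pvalU_deltaB, rootU_deltaB, one_mul]

lemma depends_of_mem_support_rwrB (val₀ : P → Ratio) (hb : b ∈ domC C) {y : B}
    (hy : y ∈ (rwrB val₀ C b).2.support) : Depends C b y :=
  ⟨_, _, xpd_mem hb, hy⟩

end Expansion

section Depth

variable {C : Set (UnitG P B × Ratio × UnitG P B)} {b y : B}

noncomputable def depth (C : Set (UnitG P B × Ratio × UnitG P B)) (b : B) : ℕ :=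
  {y | y ∈ domC C ∧ ReflTransGen (Depends C) b y}.ncard

lemma depth_pos [Finite B] (hb : b ∈ domC C) : 0 < depth C b :=
  (Set.ncard_pos (Set.toFinite _)).2 ⟨b, hb, .refl⟩

lemma depth_le_card [Finite B] : depth C b ≤ Nat.card B := Set.ncard_le_card _

lemma depth_lt_of_depends [Finite B] (hwf : WellFounded (swap (DepOrd C)))
    (h : Depends C b y) : depth C y < depth C b := by
  have hb : b ∈ domC C := let ⟨r, v, hmem, _⟩ := h; ⟨r, v, hmem⟩
  refine Set.ncard_lt_ncard ((Set.ssubset_iff_of_subset ?_).2 ⟨b, ⟨hb, .refl⟩, ?_⟩)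
  · exact fun z hz => ⟨hz.1, hz.2.head h⟩
  · exact fun hb' => hwf.irrefl.irrefl b (TransGen.head' h hb'.2)

end Depth

section Stabilization

variable (val₀ : P → Ratio) {C : Set (UnitG P B × Ratio × UnitG P B)}

lemma rwrStep_eq_self {p : Ratio × RootG B} (hp : ∀ b ∈ p.2.support, b ∉ domC C) :
    rwrStep val₀ C p = p := by
  refine Prod.ext ?_ ?_
  · change p.1 * ∏ b ∈ p.2.support, (rwrB val₀ C b).1 ^ p.2 b = p.1
    refine mul_eq_left.2 (Finset.prod_eq_one fun b hb => ?_)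
    rw [rwrB_of_notMem val₀ (hp b hb), one_zpow]
  · refine (Finset.sum_congr rfl fun b hb => ?_).trans (Finsupp.sum_single p.2)
    rw [rwrB_of_notMem val₀ (hp b hb), Finsupp.smul_single_one]

lemma mem_support_rwrStep {p : Ratio × RootG B} {y : B}
    (hy : y ∈ (rwrStep val₀ C p).2.support) :
    ∃ b ∈ p.2.support, y ∈ (rwrB val₀ C b).2.support := by
  classical
  change y ∈ (p.2.sum fun b k => k • (rwrB val₀ C b).2).support at hy
  obtain ⟨b, hb, hyb⟩ := Finset.mem_biUnion.mp (Finsupp.support_sum hy)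
  exact ⟨b, hb, Finsupp.support_smul hyb⟩

lemma isFixedPt_rwrStep_iterate [Finite B] (hwf : WellFounded (swap (DepOrd C))) (k : ℕ)
    (p : Ratio × RootG B) (hp : ∀ b ∈ p.2.support, b ∈ domC C → depth C b ≤ k) :
    IsFixedPt (rwrStep val₀ C) ((rwrStep val₀ C)^[k] p) := by
  induction k generalizing p with
  | zero =>
    exact rwrStep_eq_self val₀ fun b hb hdom =>
      (depth_pos hdom).ne' (Nat.le_zero.1 (hp b hb hdom))
  | succ k ih =>
    refine ih _ fun y hy hydom => ?_
    obtain ⟨b, hb, hyb⟩ := mem_support_rwrStep val₀ hy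
    by_cases hbdom : b ∈ domC C
    · exact Nat.le_of_lt_succ <| (depth_lt_of_depends hwf
        (depends_of_mem_support_rwrB val₀ hbdom hyb)).trans_le (hp b hb hbdom)
    · rw [rwrB_of_notMem val₀ hbdom] at hyb
      obtain rfl := Finset.mem_singleton.1 (Finsupp.support_single_subset hyb)
      exact absurd hydom hbdom

end Stabilization

section Completeness

variable (val₀ : P → Ratio) {C : Set (UnitG P B × Ratio × UnitG P B)}

lemma rwrStep_single (b : B) : rwrStep val₀ C (1, Finsupp.single b 1) = rwrB val₀ C b := by
  simp [rwrStep]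

lemma rwrStar_deltaB [Finite B] (hr : ∀ u r r' v, (u, r, v) ∈ C → (u, r', v) ∈ C → r = r')
    (hdef : IsDefining C) (hwf : WellFounded (swap (DepOrd C))) {b : B} {t : Ratio}
    {v : UnitG P B} (h : (deltaB P b, t, v) ∈ C) :
    rwrStar val₀ C (deltaB P b) = (t * (rwrStar val₀ C v).1, (rwrStar val₀ C v).2) := by
  have hb : b ∈ domC C := ⟨t, v, h⟩
  obtain ⟨m, hm⟩ : ∃ m, Nat.card B = m + 1 :=
    Nat.exists_eq_add_one.2 ((depth_pos hb).trans_le depth_le_card)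
  have hfix : IsFixedPt (rwrStep val₀ C) ((rwrStep val₀ C)^[m] (evalU val₀ v)) := by
    refine isFixedPt_rwrStep_iterate val₀ hwf m _ fun y hy _ => ?_
    have := depth_lt_of_depends hwf ⟨t, v, h, hy⟩
    have := depth_le_card (C := C) (b := b)
    omega
  have heval : evalU val₀ (deltaB P b) = (1, Finsupp.single b 1) := by
    rw [evalU, pvalU_deltaB, rootU_deltaB]
  have hrwrB : rwrB val₀ C b = (t * (evalU val₀ v).1, (evalU val₀ v).2) := by
    rw [rwrB, xpd_eq_of_mem hr hdef h]; rfl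
  rw [rwrStar, rwrStar, hm, iterate_succ_apply, iterate_succ_apply', hfix.eq, heval,
    rwrStep_single, hrwrB, rwrStep_iterate_mul_fst]

lemma rwrStar_eq_of_closureRel [Finite B]
    (hr : ∀ u r r' v, (u, r, v) ∈ C → (u, r', v) ∈ C → r = r') (hdef : IsDefining C)
    (hwf : WellFounded (swap (DepOrd C))) {u v : UnitG P B} {t : Ratio}
    (h : ClosureRel val₀ C u t v) :
    rwrStar val₀ C u = (t * (rwrStar val₀ C v).1, (rwrStar val₀ C v).2) := by
  induction h with
  | base h =>
    obtain ⟨b, rfl⟩ := hdef.1 _ _ _ h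
    exact rwrStar_deltaB val₀ hr hdef hwf h
  | mul _ _ ih ih' =>
    rw [rwrStar_add, rwrStar_add, ih, ih', mulAdd, mulAdd, mul_mul_mul_comm]
  | inv _ ih => rw [rwrStar_neg, rwrStar_neg, ih, mul_inv]
  | pe u => exact rwrStar_eq_stripU val₀ C u
  | pe' u => rw [rwrStar_eq_stripU val₀ C u, inv_mul_cancel_left]

end Completeness

namespace ClosureRel

variable {val₀ : P → Ratio} {C : Set (UnitG P B × Ratio × UnitG P B)}

lemma refl (u : UnitG P B) : ClosureRel val₀ C u 1 u := by
  have hstrip : ClosureRel val₀ C (stripU u) 1 (stripU u) := by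
    simpa only [pvalU_stripU, stripU_stripU] using pe (val₀ := val₀) (C := C) (stripU u)
  convert (pe u).mul (pe' u) |>.mul hstrip.inv using 1 <;> simp

lemma trans {u v w : UnitG P B} {r s : Ratio} (h : ClosureRel val₀ C u r v)
    (h' : ClosureRel val₀ C v s w) : ClosureRel val₀ C u (r * s) w := by
  convert (h.mul h').mul (refl v).inv using 1 <;> simp

lemma symm {u v : UnitG P B} {r : Ratio} (h : ClosureRel val₀ C u r v) :
    ClosureRel val₀ C v r⁻¹ u := by
  convert h.inv.mul (refl (u + v)) using 1 <;> simp

lemma zsmul {u v : UnitG P B} {r : Ratio} (h : ClosureRel val₀ C u r v) (z : ℤ) :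
    ClosureRel val₀ C (z • u) (r ^ z) (z • v) := by
  induction z using Int.induction_on with
  | zero => simpa using refl 0
  | succ n ih => convert ih.mul h using 1 <;> simp [add_smul, zpow_add_one]
  | pred n ih => convert ih.mul h.inv using 1 <;> simp [sub_eq_add_neg, add_smul, zpow_add]

lemma finset_sum {ι : Type*} (s : Finset ι) {u v : ι → UnitG P B} {r : ι → Ratio}
    (h : ∀ i ∈ s, ClosureRel val₀ C (u i) (r i) (v i)) :
    ClosureRel val₀ C (∑ i ∈ s, u i) (∏ i ∈ s, r i) (∑ i ∈ s, v i) := by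
  classical
  induction s using Finset.induction_on with
  | empty => simpa using refl 0
  | insert a s ha ih =>
    rw [Finset.sum_insert ha, Finset.prod_insert ha, Finset.sum_insert ha]
    exact (h a (Finset.mem_insert_self a s)).mul
      (ih fun i hi => h i (Finset.mem_insert_of_mem hi))

end ClosureRel

section Soundness

variable (val₀ : P → Ratio) (C : Set (UnitG P B × Ratio × UnitG P B))

lemma closureRel_deltaB_rwrB (b : B) :
    ClosureRel val₀ C (deltaB P b) (rwrB val₀ C b).1 (unrootU (rwrB val₀ C b).2) := by
  by_cases hb : b ∈ domC C
  · exact (ClosureRel.base (xpd_mem hb)).trans (ClosureRel.pe _)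
  · rw [rwrB_of_notMem val₀ hb, unrootU, Finsupp.mapDomain_single]
    exact ClosureRel.refl _

lemma closureRel_unrootU_rwrStep (f : RootG B) :
    ClosureRel val₀ C (unrootU f) (∏ b ∈ f.support, (rwrB val₀ C b).1 ^ f b)
      (unrootU (∑ b ∈ f.support, f b • (rwrB val₀ C b).2)) := by
  rw [unrootU_eq_sum, unrootU, Finsupp.mapDomain_finsetSum]
  refine ClosureRel.finset_sum _ fun b _ => ?_
  rw [Finsupp.mapDomain_smul]
  exact (closureRel_deltaB_rwrB val₀ C b).zsmul _

lemma closureRel_rwrStep {u : UnitG P B} {p : Ratio × RootG B}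
    (h : ClosureRel val₀ C u p.1 (unrootU p.2)) :
    ClosureRel val₀ C u (rwrStep val₀ C p).1 (unrootU (rwrStep val₀ C p).2) :=
  h.trans (closureRel_unrootU_rwrStep val₀ C p.2)

lemma closureRel_rwrStar (u : UnitG P B) :
    ClosureRel val₀ C u (rwrStar val₀ C u).1 (unrootU (rwrStar val₀ C u).2) :=
  Iterate.rec (fun p : Ratio × RootG B => ClosureRel val₀ C u p.1 (unrootU p.2))
    (ClosureRel.pe u) (fun _ => closureRel_rwrStep val₀ C) _

end Soundness

/-- Exhaustive rewriting solves the well-defined conversion problem: the closure of a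
well-defining conversion equals the relation induced by exhaustive rewriting. -/
theorem closure_eq_rewriting {P B D : Type*} [Finite B] (val₀ : P → Ratio)
    (dim₀ : B → D →₀ ℤ) (C : Set (UnitG P B × Ratio × UnitG P B))
    (hC : IsConversion dim₀ C) (hdef : IsDefining C)
    (hwf : WellFounded (Function.swap (DepOrd C))) :
    convClosure val₀ C = {t : UnitG P B × Ratio × UnitG P B |
      ∃ (r s : Ratio) (w : RootG B),
        rwrStar val₀ C t.1 = (r, w) ∧ rwrStar val₀ C t.2.2 = (s, w) ∧
        t.2.1 = r * s⁻¹} := by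
  ext ⟨u, t, v⟩
  constructor
  · intro h
    exact ⟨_, _, _, rwrStar_eq_of_closureRel val₀ hC.2 hdef hwf h, rfl,
      (mul_inv_cancel_right t _).symm⟩
  · rintro ⟨r, s, w, hu, hv, rfl⟩
    have hu' := closureRel_rwrStar val₀ C u
    have hv' := closureRel_rwrStar val₀ C v
    rw [hu] at hu'
    rw [hv] at hv'
    exact hu'.trans hv'.symm
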